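/- Let ℓ ≥ 1, n ≥ ℓ+1, and let C be a family of (ℓ+1)-element subsets of [n] satisfying condition (C_{ℓ+1}) which is not equal to the family of all (ℓ+1)-element subsets of [n]. Then every ℓ-generic matroid on [n] whose family of circuits of cardinality ℓ+1 equals C has rank greater than ℓ, and there exists exactly one such ℓ-generic matroid of rank ℓ+1. -/

import Mathlib

noncomputable section

/-- `C` is a circuit of the matroid `M`: a minimal dependent subset of the ground set. -/
def IsCircuitF (M : Matroid ℕ) (C : Finset ℕ) : Prop :=
  ↑C ⊆ M.E ∧ ¬ M.Indep ↑C ∧ ∀ x ∈ C, M.Indep ↑(C.erase x)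

/-- `M` is `ℓ`-generic: it has no circuits of cardinality at most `ℓ`. -/
def GenericM (ℓ : ℕ) (M : Matroid ℕ) : Prop :=
  ∀ C : Finset ℕ, IsCircuitF M C → ℓ < C.card

/-- `M` has rank `r`: it has a base of cardinality `r`. -/
def HasRank (M : Matroid ℕ) (r : ℕ) : Prop :=
  ∃ B : Finset ℕ, M.IsBase ↑B ∧ B.card = r

/-- Condition `(C_{ℓ+1})` for a family `𝒞` of `(ℓ+1)`-element subsets:  whenever
`C₁, C₂ ∈ 𝒞` and `|C₁ ∪ C₂| = ℓ+2`, every `(ℓ+1)`-element subset of `C₁ ∪ C₂` is in `𝒞`. -/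
def CondC (ℓ : ℕ) (𝒞 : Set (Finset ℕ)) : Prop :=
  ∀ C₁ ∈ 𝒞, ∀ C₂ ∈ 𝒞, (C₁ ∪ C₂).card = ℓ + 2 →
    ∀ C₃ : Finset ℕ, C₃ ⊆ C₁ ∪ C₂ → C₃.card = ℓ + 1 → C₃ ∈ 𝒞

end

/-!
An `ℓ`-generic matroid of rank `ℓ + 1` is forced: its independent sets are the sets of size at
most `ℓ` and the `(ℓ+1)`-sets that are not circuits, so it is determined by its `(ℓ+1)`-circuits.
Conversely, `(C_{ℓ+1})` is what makes this recipe satisfy augmentation: if `|I| = ℓ` and `I + x`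
lay in `𝒞` for every `x ∈ J \ I`, then trading an element of `I \ J` for one of `J \ I` keeps this
property (two members of `𝒞` sharing `I` put every `(ℓ+1)`-subset of their union into `𝒞`) and
moves `I` towards `J`, until `J` itself is forced into `𝒞`. An `(ℓ+1)`-set outside `𝒞` is
independent in any such matroid, which is why every base has more than `ℓ` elements.
-/

open Finset

section Matroid

variable {M : Matroid ℕ} {ℓ : ℕ}

lemma isCircuitF_iff_isCircuit {C : Finset ℕ} : IsCircuitF M C ↔ M.IsCircuit ↑C := by
  simp [IsCircuitF, Matroid.isCircuit_iff_dep_forall_sdiff_singleton_indep, Matroid.Dep,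
    and_comm, and_assoc]

lemma exists_isCircuitF_subset {S : Finset ℕ} (hS : M.Dep ↑S) : ∃ C ⊆ S, IsCircuitF M C := by
  obtain ⟨C, hCS, hC⟩ := hS.exists_isCircuit_subset
  obtain ⟨C, rfl⟩ := (S.finite_toSet.subset hCS).exists_finset_coe
  exact ⟨C, coe_subset.mp hCS, isCircuitF_iff_isCircuit.mpr hC⟩

lemma card_le_card_of_indep_of_isBase {S B : Finset ℕ} (hS : M.Indep ↑S) (hB : M.IsBase ↑B) :
    S.card ≤ B.card := by
  have := hS.encard_le_eRank
  rwa [← hB.encard_eq_eRank, Set.encard_coe_eq_coe_finsetCard,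
    Set.encard_coe_eq_coe_finsetCard, Nat.cast_le] at this

lemma HasRank.card_le_of_indep {r : ℕ} (hM : HasRank M r) {S : Finset ℕ} (hS : M.Indep ↑S) :
    S.card ≤ r := by
  obtain ⟨B, hB, rfl⟩ := hM
  exact card_le_card_of_indep_of_isBase hS hB

namespace GenericM

lemma indep_of_card_le (hM : GenericM ℓ M) {S : Finset ℕ} (hSE : ↑S ⊆ M.E)
    (hS : S.card ≤ ℓ) : M.Indep ↑S := by
  by_contra hdep
  obtain ⟨C, hCS, hC⟩ := exists_isCircuitF_subset ⟨hdep, hSE⟩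
  have := card_le_card hCS
  have := hM C hC
  omega

lemma indep_iff_not_isCircuitF (hM : GenericM ℓ M) {S : Finset ℕ} (hSE : ↑S ⊆ M.E)
    (hS : S.card = ℓ + 1) : M.Indep ↑S ↔ ¬ IsCircuitF M S := by
  refine ⟨fun hind hC ↦ hC.2.1 hind, fun hnC ↦ ?_⟩
  by_contra hdep
  obtain ⟨C, hCS, hC⟩ := exists_isCircuitF_subset ⟨hdep, hSE⟩
  obtain rfl : C = S := eq_of_subset_of_card_le hCS (by have := hM C hC; omega)
  exact hnC hC

lemma lt_card_of_isBase (hM : GenericM ℓ M) {B S : Finset ℕ} (hB : M.IsBase ↑B)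
    (hSE : ↑S ⊆ M.E) (hS : S.card = ℓ + 1) (hSC : ¬ IsCircuitF M S) : ℓ < B.card := by
  have := card_le_card_of_indep_of_isBase ((hM.indep_iff_not_isCircuitF hSE hS).mpr hSC) hB
  omega

lemma indep_iff_of_hasRank (hM : GenericM ℓ M) (hr : HasRank M (ℓ + 1)) {S : Finset ℕ}
    (hSE : ↑S ⊆ M.E) : M.Indep ↑S ↔ S.card ≤ ℓ ∨ S.card = ℓ + 1 ∧ ¬ IsCircuitF M S := by
  refine ⟨fun hS ↦ ?_, ?_⟩
  · obtain hle | hcard := Nat.le_succ_iff.mp (hr.card_le_of_indep hS)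
    · exact Or.inl hle
    · exact Or.inr ⟨hcard, (hM.indep_iff_not_isCircuitF hSE hcard).mp hS⟩
  · rintro (hS | ⟨hS, hSC⟩)
    · exact hM.indep_of_card_le hSE hS
    · exact (hM.indep_iff_not_isCircuitF hSE hS).mpr hSC

lemma eq_of_isCircuitF_iff {M' : Matroid ℕ} (hM : GenericM ℓ M) (hM' : GenericM ℓ M')
    (hr : HasRank M (ℓ + 1)) (hr' : HasRank M' (ℓ + 1)) (hE : M.E = M'.E) (hfin : M.E.Finite)
    (hC : ∀ C : Finset ℕ, C.card = ℓ + 1 → (IsCircuitF M C ↔ IsCircuitF M' C)) : M = M' := by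
  refine Matroid.ext_indep hE fun I hI ↦ ?_
  obtain ⟨S, rfl⟩ := (hfin.subset hI).exists_finset_coe
  rw [hM.indep_iff_of_hasRank hr hI, hM'.indep_iff_of_hasRank hr' (hE ▸ hI)]
  grind

end GenericM

end Matroid

namespace CondC

variable {ℓ : ℕ} {𝒞 : Set (Finset ℕ)}

lemma insert_insert_erase_mem (hcond : CondC ℓ 𝒞) {I : Finset ℕ} {x w z : ℕ}
    (hI : I.card = ℓ) (hxI : x ∉ I) (hwI : w ∉ I) (hwx : w ≠ x) (hzI : z ∈ I)
    (hx : insert x I ∈ 𝒞) (hw : insert w I ∈ 𝒞) : insert w (insert x (I.erase z)) ∈ 𝒞 := by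
  have hunion : insert x I ∪ insert w I = insert w (insert x I) := by grind
  refine hcond _ hx _ hw ?_ _ ?_ ?_
  · rw [hunion, card_insert_of_notMem (by grind), card_insert_of_notMem hxI, hI]
  · rw [hunion]
    exact insert_subset_insert _ (insert_subset_insert _ (erase_subset _ _))
  · rw [card_insert_of_notMem (by grind), card_insert_of_notMem (by grind),
      card_erase_of_mem hzI]
    have := card_pos.mpr ⟨z, hzI⟩
    omega

lemma exists_insert_notMem (hcond : CondC ℓ 𝒞) {I J : Finset ℕ} (hI : I.card = ℓ)
    (hJ : J.card = ℓ + 1) (hJ𝒞 : J ∉ 𝒞) : ∃ x ∈ J, x ∉ I ∧ insert x I ∉ 𝒞 := by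
  induction hk : (I \ J).card generalizing I with
  | zero =>
    have hIJ : I ⊆ J := sdiff_eq_empty_iff_subset.mp (card_eq_zero.mp hk)
    obtain ⟨x, hxJ, hxI⟩ := exists_mem_notMem_of_card_lt_card (by omega : I.card < J.card)
    have hJx : insert x I = J :=
      eq_of_subset_of_card_le (insert_subset hxJ hIJ) (by rw [card_insert_of_notMem hxI]; omega)
    exact ⟨x, hxJ, hxI, hJx ▸ hJ𝒞⟩
  | succ k ih =>
    by_contra! hall
    obtain ⟨z, hz⟩ := card_pos.mp (by omega : 0 < (I \ J).card)
    obtain ⟨hzI, hzJ⟩ := mem_sdiff.mp hz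
    obtain ⟨x, hxJ, hxI⟩ := exists_mem_notMem_of_card_lt_card (by omega : I.card < J.card)
    have hcard : (insert x (I.erase z)).card = ℓ := by
      rw [card_insert_of_notMem fun h ↦ hxI (mem_of_mem_erase h), card_erase_of_mem hzI, hI]
      have := card_pos.mpr ⟨z, hzI⟩
      omega
    have hsdiff : (insert x (I.erase z) \ J).card = k := by
      rw [insert_sdiff_of_mem _ hxJ, erase_sdiff_comm, card_erase_of_mem hz, hk, Nat.add_sub_cancel]
    obtain ⟨w, hwJ, hwI', hw⟩ := ih hcard hsdiff
    simp only [mem_insert, mem_erase, not_or, not_and] at hwI'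
    have hwI : w ∉ I := hwI'.2 fun hwz ↦ hzJ (hwz ▸ hwJ)
    exact hw (hcond.insert_insert_erase_mem hI hxI hwI hwI'.1 hzI
      (hall x hxJ hxI) (hall w hwJ hwI))

def toMatroid (hcond : CondC ℓ 𝒞) (E : Finset ℕ) : Matroid ℕ :=
  (IndepMatroid.ofFinset E (fun S ↦ S ⊆ E ∧ (S.card ≤ ℓ ∨ S.card = ℓ + 1 ∧ S ∉ 𝒞))
    ⟨empty_subset E, Or.inl (by simp)⟩
    (fun I J ⟨hJE, hJ⟩ hIJ ↦ ⟨hIJ.trans hJE, by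
      have hcard := card_le_card hIJ
      rcases hJ with hJ | ⟨hJ, hJ𝒞⟩
      · exact Or.inl (by omega)
      · obtain hle | heq := hcard.lt_or_eq
        · exact Or.inl (by omega)
        · exact Or.inr ⟨by omega, eq_of_subset_of_card_le hIJ heq.ge ▸ hJ𝒞⟩⟩)
    (fun I J ⟨hIE, hI⟩ ⟨hJE, hJ⟩ hIJ ↦ by
      by_cases hIℓ : I.card < ℓ
      · obtain ⟨x, hxJ, hxI⟩ := exists_mem_notMem_of_card_lt_card hIJ
        exact ⟨x, hxJ, hxI, insert_subset (hJE hxJ) hIE,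
          Or.inl (by rw [card_insert_of_notMem hxI]; omega)⟩
      · have hJle : J.card ≤ ℓ + 1 := by rcases hJ with h | ⟨h, _⟩ <;> omega
        have hIcard : I.card = ℓ := by rcases hI with h | ⟨h, _⟩ <;> omega
        obtain ⟨hJ, hJ𝒞⟩ := hJ.resolve_left (by omega)
        obtain ⟨x, hxJ, hxI, hx𝒞⟩ := hcond.exists_insert_notMem hIcard hJ hJ𝒞
        exact ⟨x, hxJ, hxI, insert_subset (hJE hxJ) hIE,
          Or.inr ⟨by rw [card_insert_of_notMem hxI]; omega, hx𝒞⟩⟩)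
    (fun _ ⟨hIE, _⟩ ↦ coe_subset.mpr hIE)).matroid

lemma toMatroid_indep_iff (hcond : CondC ℓ 𝒞) {E S : Finset ℕ} :
    (hcond.toMatroid E).Indep ↑S ↔ S ⊆ E ∧ (S.card ≤ ℓ ∨ S.card = ℓ + 1 ∧ S ∉ 𝒞) := by
  simp [toMatroid]

lemma genericM_toMatroid (hcond : CondC ℓ 𝒞) (E : Finset ℕ) :
    GenericM ℓ (hcond.toMatroid E) := by
  intro C hC
  by_contra hle
  exact hC.2.1 (hcond.toMatroid_indep_iff.mpr ⟨coe_subset.mp hC.1, Or.inl (not_lt.mp hle)⟩)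

lemma isCircuitF_toMatroid_iff (hcond : CondC ℓ 𝒞) {E : Finset ℕ}
    (h𝒞 : ∀ C ∈ 𝒞, C ⊆ E ∧ C.card = ℓ + 1) (C : Finset ℕ) :
    IsCircuitF (hcond.toMatroid E) C ∧ C.card = ℓ + 1 ↔ C ∈ 𝒞 := by
  refine ⟨fun ⟨hC, hcard⟩ ↦ ?_, fun hC ↦ ?_⟩
  · by_contra hC𝒞
    exact hC.2.1 (hcond.toMatroid_indep_iff.mpr ⟨coe_subset.mp hC.1, Or.inr ⟨hcard, hC𝒞⟩⟩)
  · obtain ⟨hCE, hcard⟩ := h𝒞 C hC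
    refine ⟨?_, hcard⟩
    by_contra hnC
    have hind := ((hcond.genericM_toMatroid E).indep_iff_not_isCircuitF
      (coe_subset.mpr hCE) hcard).mpr hnC
    rcases (hcond.toMatroid_indep_iff.mp hind).2 with hle | ⟨-, hC𝒞⟩
    · omega
    · exact hC𝒞 hC

lemma hasRank_toMatroid (hcond : CondC ℓ 𝒞) {E B : Finset ℕ} (hBE : B ⊆ E)
    (hB : B.card = ℓ + 1) (hB𝒞 : B ∉ 𝒞) : HasRank (hcond.toMatroid E) (ℓ + 1) := by
  refine ⟨B, (hcond.toMatroid_indep_iff.mpr ⟨hBE, Or.inr ⟨hB, hB𝒞⟩⟩).isBase_of_forall_insert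
    fun e he hind ↦ ?_, hB⟩
  rw [← coe_insert, toMatroid_indep_iff, card_insert_of_notMem (by simpa using he.2)] at hind
  rcases hind.2 with h | ⟨h, -⟩ <;> omega

end CondC

theorem rank_and_uniqueness_of_generic_matroid_general
    (ℓ n : ℕ) (𝒞 : Set (Finset ℕ))
    (h𝒞 : ∀ C ∈ 𝒞, C ⊆ Finset.Icc 1 n ∧ C.card = ℓ + 1)
    (hcond : CondC ℓ 𝒞)
    (hne : 𝒞 ≠ {C : Finset ℕ | C ⊆ Finset.Icc 1 n ∧ C.card = ℓ + 1}) :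
    (∀ M : Matroid ℕ, M.E = ↑(Finset.Icc 1 n) → GenericM ℓ M →
      (∀ C : Finset ℕ, (IsCircuitF M C ∧ C.card = ℓ + 1) ↔ C ∈ 𝒞) →
      ∀ B : Finset ℕ, M.IsBase ↑B → ℓ < B.card) ∧
    (∃! M : Matroid ℕ, M.E = ↑(Finset.Icc 1 n) ∧ GenericM ℓ M ∧
      (∀ C : Finset ℕ, (IsCircuitF M C ∧ C.card = ℓ + 1) ↔ C ∈ 𝒞) ∧
      HasRank M (ℓ + 1)) := by
  obtain ⟨S, ⟨hSE, hS⟩, hS𝒞⟩ :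
      ∃ S ∈ {C : Finset ℕ | C ⊆ Finset.Icc 1 n ∧ C.card = ℓ + 1}, S ∉ 𝒞 := by
    by_contra! h
    exact hne (Set.Subset.antisymm h𝒞 h)
  refine ⟨fun M hE hM hcirc B hB ↦ hM.lt_card_of_isBase hB (hE ▸ coe_subset.mpr hSE) hS
    fun hSC ↦ hS𝒞 ((hcirc S).mp ⟨hSC, hS⟩), ?_⟩
  refine ⟨hcond.toMatroid (Icc 1 n), ⟨rfl, hcond.genericM_toMatroid _,
    hcond.isCircuitF_toMatroid_iff h𝒞, hcond.hasRank_toMatroid hSE hS hS𝒞⟩, ?_⟩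
  rintro M ⟨hE, hM, hcirc, hr⟩
  refine hM.eq_of_isCircuitF_iff (hcond.genericM_toMatroid _) hr
    (hcond.hasRank_toMatroid hSE hS hS𝒞) hE (hE ▸ (Icc 1 n).finite_toSet) fun C hC ↦ ?_
  simpa [hC] using (hcirc C).trans (hcond.isCircuitF_toMatroid_iff h𝒞 C).symm

theorem rank_and_uniqueness_of_generic_matroid
    (ℓ n : ℕ) (hℓ : 1 ≤ ℓ) (hn : ℓ + 1 ≤ n) (𝒞 : Set (Finset ℕ))
    (h𝒞 : ∀ C ∈ 𝒞, C ⊆ Finset.Icc 1 n ∧ C.card = ℓ + 1)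
    (hcond : CondC ℓ 𝒞)
    (hne : 𝒞 ≠ {C : Finset ℕ | C ⊆ Finset.Icc 1 n ∧ C.card = ℓ + 1}) :
    (∀ M : Matroid ℕ, M.E = ↑(Finset.Icc 1 n) → GenericM ℓ M →
      (∀ C : Finset ℕ, (IsCircuitF M C ∧ C.card = ℓ + 1) ↔ C ∈ 𝒞) →
      ∀ B : Finset ℕ, M.IsBase ↑B → ℓ < B.card) ∧
    (∃! M : Matroid ℕ, M.E = ↑(Finset.Icc 1 n) ∧ GenericM ℓ M ∧
      (∀ C : Finset ℕ, (IsCircuitF M C ∧ C.card = ℓ + 1) ↔ C ∈ 𝒞) ∧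
      HasRank M (ℓ + 1)) :=
  rank_and_uniqueness_of_generic_matroid_general ℓ n 𝒞 h𝒞 hcond hne
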